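/- For any matrices Z₁, Z₂ ∈ ℝ^{d×n}, the quantity ΔR(Z₁, Z₂) := R([Z₁ Z₂]) − (1/2)R(Z₁) − (1/2)R(Z₂) is nonnegative, where R(Z) := (1/2)·log det(I_d + (d/(mε²)) Z Zᵀ) with m the number of columns of Z and ε > 0. Moreover, ΔR(Z₁, Z₂) = 0 if and only if Z₁Z₁ᵀ = Z₂Z₂ᵀ. -/

import Mathlib

open Matrix

noncomputable def codingRate {d : ℕ} {m : Type*} [Fintype m] (ε : ℝ)
    (Z : Matrix (Fin d) m ℝ) : ℝ :=
  (1 / 2) * Real.log ((1 + ((d : ℝ) / (Fintype.card m * ε ^ 2)) • (Z * Zᵀ)).det)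

noncomputable def deltaR {d n : ℕ} (ε : ℝ) (Z₁ Z₂ : Matrix (Fin d) (Fin n) ℝ) : ℝ :=
  codingRate ε (fromCols Z₁ Z₂) - (1 / 2) * codingRate ε Z₁ - (1 / 2) * codingRate ε Z₂

theorem Matrix.isHermitian_transpose_mul_self {m n : Type*} [Fintype m]
    (A : Matrix m n ℝ) : (Aᵀ * A).IsHermitian := by
  simpa using Matrix.isHermitian_conjTranspose_mul_self A

noncomputable def sval {d n : ℕ} (A : Matrix (Fin d) (Fin n) ℝ) : Fin n → ℝ :=
  fun p => Real.sqrt ((Matrix.isHermitian_transpose_mul_self A).eigenvalues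
    (Tuple.sort ((Matrix.isHermitian_transpose_mul_self A).eigenvalues) p.rev))

noncomputable def colSpan {d n : ℕ} (A : Matrix (Fin d) (Fin n) ℝ) :
    Submodule ℝ (Fin d → ℝ) :=
  Submodule.span ℝ (Set.range Aᵀ)

/-!
With `M = 1 + c Z₁Z₁ᵀ` and `N = 1 + c Z₂Z₂ᵀ`, `4 ΔR = 2 log det ((M + N) / 2) - log det M - log det N`,
so the theorem is strict midpoint concavity of `log det` on positive definite matrices.
Conjugating by `M^{-1/2}` reduces it to `M = 1`, where it becomes the scalar inequality
`log μ ≤ 2 log ((1 + μ) / 2)` (concavity of `log`) for each eigenvalue `μ` of `M^{-1/2} N M^{-1/2}`,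
strict unless `μ = 1`.
-/

open Real

lemma log_le_two_mul_log_half_one_add {x : ℝ} (hx : 0 < x) :
    log x ≤ 2 * log (1 / 2 * (1 + x)) := by
  have := strictConcaveOn_log_Ioi.concaveOn.2 (Set.mem_Ioi.2 one_pos) (Set.mem_Ioi.2 hx)
    (by norm_num : (0 : ℝ) ≤ 1 / 2) (by norm_num : (0 : ℝ) ≤ 1 / 2) (by norm_num)
  rw [mul_add, mul_one]
  simp only [smul_eq_mul, log_one] at this
  linarith

lemma log_lt_two_mul_log_half_one_add {x : ℝ} (hx : 0 < x) (hx1 : x ≠ 1) :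
    log x < 2 * log (1 / 2 * (1 + x)) := by
  have := strictConcaveOn_log_Ioi.2 (Set.mem_Ioi.2 one_pos) (Set.mem_Ioi.2 hx) hx1.symm
    (by norm_num : (0 : ℝ) < 1 / 2) (by norm_num : (0 : ℝ) < 1 / 2) (by norm_num)
  rw [mul_add, mul_one]
  simp only [smul_eq_mul, log_one] at this
  linarith

namespace Matrix

variable {n : Type*} [Fintype n] [DecidableEq n]

lemma IsHermitian.det_cfc {A : Matrix n n ℝ} (hA : A.IsHermitian) (f : ℝ → ℝ) :
    (cfc f A).det = ∏ i, f (hA.eigenvalues i) := by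
  rw [hA.cfc_eq]
  simp [IsHermitian.cfc, -Unitary.conjStarAlgAut_apply]

lemma IsHermitian.cfc_half_one_add {A : Matrix n n ℝ} (hA : A.IsHermitian) :
    cfc (fun x : ℝ => 1 / 2 * (1 + x)) A = (1 / 2 : ℝ) • (1 + A) := by
  have : IsSelfAdjoint A := hA
  rw [cfc_const_mul .., cfc_const_add .., cfc_id' .., map_one]

lemma IsHermitian.eq_one_of_eigenvalues_eq_one {A : Matrix n n ℝ} (hA : A.IsHermitian)
    (h : ∀ i, hA.eigenvalues i = 1) : A = 1 := by
  have : IsSelfAdjoint A := hA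
  calc A = cfc id A := (cfc_id ℝ A).symm
    _ = cfc (fun _ => 1) A := cfc_congr fun x hx => by
        rw [hA.spectrum_real_eq_range_eigenvalues] at hx
        obtain ⟨i, rfl⟩ := hx
        exact h i
    _ = 1 := cfc_const_one ℝ A

lemma PosDef.log_det_eq_sum {A : Matrix n n ℝ} (hA : A.PosDef) :
    log A.det = ∑ i, log (hA.1.eigenvalues i) := by
  rw [hA.1.det_eq_prod_eigenvalues]
  simpa using log_prod fun i _ => (hA.eigenvalues_pos i).ne'

lemma PosDef.log_det_half_one_add_eq_sum {A : Matrix n n ℝ} (hA : A.PosDef) :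
    log ((1 / 2 : ℝ) • (1 + A)).det = ∑ i, log (1 / 2 * (1 + hA.1.eigenvalues i)) := by
  rw [← hA.1.cfc_half_one_add, hA.1.det_cfc]
  exact log_prod fun i _ => by linarith [hA.eigenvalues_pos i]

lemma PosDef.log_det_le_two_mul_log_det_half_one_add {A : Matrix n n ℝ} (hA : A.PosDef) :
    log A.det ≤ 2 * log ((1 / 2 : ℝ) • (1 + A)).det := by
  rw [hA.log_det_eq_sum, hA.log_det_half_one_add_eq_sum, Finset.mul_sum]
  exact Finset.sum_le_sum fun i _ => log_le_two_mul_log_half_one_add (hA.eigenvalues_pos i)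

lemma PosDef.log_det_lt_two_mul_log_det_half_one_add {A : Matrix n n ℝ} (hA : A.PosDef)
    (hA1 : A ≠ 1) : log A.det < 2 * log ((1 / 2 : ℝ) • (1 + A)).det := by
  obtain ⟨i, hi⟩ : ∃ i, hA.1.eigenvalues i ≠ 1 := by
    by_contra! h
    exact hA1 (hA.1.eq_one_of_eigenvalues_eq_one h)
  rw [hA.log_det_eq_sum, hA.log_det_half_one_add_eq_sum, Finset.mul_sum]
  exact Finset.sum_lt_sum
    (fun i _ => log_le_two_mul_log_half_one_add (hA.eigenvalues_pos i))
    ⟨i, Finset.mem_univ i, log_lt_two_mul_log_half_one_add (hA.eigenvalues_pos i) hi⟩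

lemma PosDef.exists_eq_mul_self_and_eq_mul_mul {M N : Matrix n n ℝ} (hM : M.PosDef)
    (hN : N.PosDef) : ∃ S C : Matrix n n ℝ, S.det ≠ 0 ∧ C.PosDef ∧ M = S * S ∧ N = S * C * S := by
  open scoped MatrixOrder in
  set S := CFC.sqrt M
  have hSS : S * S = M := CFC.sqrt_mul_sqrt_self M hM.posSemidef.nonneg
  have hSH : Sᴴ = S := (nonneg_iff_posSemidef.1 (CFC.sqrt_nonneg M)).1
  have hS : S.det ≠ 0 := fun h => hM.det_pos.ne' (by rw [← hSS, det_mul, h, zero_mul])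
  have hSU : IsUnit S.det := isUnit_iff_ne_zero.2 hS
  refine ⟨S, S⁻¹ * N * S⁻¹, hS, ?_, hSS.symm, ?_⟩
  · have := hN.conjTranspose_mul_mul_same (B := S⁻¹)
      (mulVec_injective_iff_isUnit.2 ((isUnit_iff_isUnit_det _).2 (isUnit_nonsing_inv_det _ hSU)))
    rwa [conjTranspose_nonsing_inv, hSH] at this
  · rw [← mul_assoc, ← mul_assoc, mul_nonsing_inv _ hSU, one_mul, mul_assoc, nonsing_inv_mul _ hSU,
      mul_one]

lemma two_mul_log_det_half_add_mul_mul_sub {S C : Matrix n n ℝ} (hS : S.det ≠ 0)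
    (hC : C.PosDef) :
    2 * log ((1 / 2 : ℝ) • (S * S + S * C * S)).det - (log (S * S).det + log (S * C * S).det) =
      2 * log ((1 / 2 : ℝ) • (1 + C)).det - log C.det := by
  have hmid : (1 / 2 : ℝ) • (S * S + S * C * S) = S * ((1 / 2 : ℝ) • (1 + C)) * S := by
    rw [Matrix.mul_smul, Matrix.smul_mul, mul_add, add_mul, mul_one]
  have hmid_det : ((1 / 2 : ℝ) • (1 + C)).det ≠ 0 :=
    ((PosDef.one.add hC).smul (by norm_num : (0 : ℝ) < 1 / 2)).det_pos.ne'
  rw [hmid]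
  simp only [det_mul]
  rw [log_mul hS hS, log_mul (mul_ne_zero hS hmid_det) hS, log_mul hS hmid_det,
    log_mul (mul_ne_zero hS hC.det_pos.ne') hS, log_mul hS hC.det_pos.ne']
  ring

theorem PosDef.log_det_add_log_det_le {M N : Matrix n n ℝ} (hM : M.PosDef) (hN : N.PosDef) :
    log M.det + log N.det ≤ 2 * log ((1 / 2 : ℝ) • (M + N)).det := by
  obtain ⟨S, C, hS, hC, rfl, rfl⟩ := hM.exists_eq_mul_self_and_eq_mul_mul hN
  linarith [two_mul_log_det_half_add_mul_mul_sub hS hC, hC.log_det_le_two_mul_log_det_half_one_add]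

theorem PosDef.log_det_add_log_det_lt {M N : Matrix n n ℝ} (hM : M.PosDef) (hN : N.PosDef)
    (hMN : M ≠ N) : log M.det + log N.det < 2 * log ((1 / 2 : ℝ) • (M + N)).det := by
  obtain ⟨S, C, hS, hC, rfl, rfl⟩ := hM.exists_eq_mul_self_and_eq_mul_mul hN
  have hC1 : C ≠ 1 := by
    rintro rfl
    exact hMN (by rw [mul_one])
  linarith [two_mul_log_det_half_add_mul_mul_sub hS hC,
    hC.log_det_lt_two_mul_log_det_half_one_add hC1]

theorem PosDef.log_det_add_log_det_eq_iff {M N : Matrix n n ℝ} (hM : M.PosDef) (hN : N.PosDef) :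
    log M.det + log N.det = 2 * log ((1 / 2 : ℝ) • (M + N)).det ↔ M = N := by
  refine ⟨fun h => by_contra fun hMN => (hM.log_det_add_log_det_lt hN hMN).ne h, ?_⟩
  rintro rfl
  rw [← two_smul ℝ M, smul_smul]
  norm_num
  ring

end Matrix

lemma codingRate_fromCols {d : ℕ} {m : Type*} [Fintype m] (ε : ℝ) (Z₁ Z₂ : Matrix (Fin d) m ℝ) :
    codingRate ε (fromCols Z₁ Z₂) = 1 / 2 * log ((1 / 2 : ℝ) •
      ((1 + ((d : ℝ) / (Fintype.card m * ε ^ 2)) • (Z₁ * Z₁ᵀ)) +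
        (1 + ((d : ℝ) / (Fintype.card m * ε ^ 2)) • (Z₂ * Z₂ᵀ)))).det := by
  rw [codingRate, transpose_fromCols, fromCols_mul_fromRows, Fintype.card_sum]
  congr 4
  module

/-- ΔR(Z₁,Z₂) ≥ 0, with equality iff Z₁Z₁ᵀ = Z₂Z₂ᵀ. -/
theorem stmt0 {d n : ℕ} (hd : 1 ≤ d) (hn : 1 ≤ n) (ε : ℝ) (hε : 0 < ε)
    (Z₁ Z₂ : Matrix (Fin d) (Fin n) ℝ) :
    0 ≤ deltaR ε Z₁ Z₂ ∧ (deltaR ε Z₁ Z₂ = 0 ↔ Z₁ * Z₁ᵀ = Z₂ * Z₂ᵀ) := by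
  set c : ℝ := d / (n * ε ^ 2)
  have hc : 0 < c := by positivity
  have hpos : ∀ Z : Matrix (Fin d) (Fin n) ℝ, (1 + c • (Z * Zᵀ)).PosDef := fun Z =>
    PosDef.one.add_posSemidef ((posSemidef_self_mul_conjTranspose Z).smul hc.le)
  set M := 1 + c • (Z₁ * Z₁ᵀ)
  set N := 1 + c • (Z₂ * Z₂ᵀ)
  have hΔ : deltaR ε Z₁ Z₂ =
      (2 * log ((1 / 2 : ℝ) • (M + N)).det - (log M.det + log N.det)) / 4 := by
    rw [deltaR, codingRate_fromCols, codingRate, codingRate, Fintype.card_fin]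
    ring
  refine ⟨?_, ?_⟩
  · rw [hΔ]
    linarith [(hpos Z₁).log_det_add_log_det_le (hpos Z₂)]
  · rw [hΔ, div_eq_zero_iff, sub_eq_zero, eq_comm, (hpos Z₁).log_det_add_log_det_eq_iff (hpos Z₂)]
    simp [smul_right_inj hc.ne']
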